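/- Let Q be a finite nonempty set of hypotheses, where hypothesis q has cardinality n_q ∈ ℕ, weight ω_q ≥ 0 with ∑_{q ∈ Q} ω_q = 1, and single-target pdfs p_{q,1}, …, p_{q,n_q}. Define the predicted multi-target pdf family p⁻(X, n) = ∑_{q : n_q = n} ω_q ∑_{ν ∈ Perm(Fin n)} ∏_{i=1}^n p_{q,i}(x_{ν(i)}) for X ∈ E^n. Assume every single-target evidence e_{q,σ,i} := ∫_E ℓ̃(σ, i, x) p_{q,i}(x) dμ(x) is finite and positive (σ ranging over data associations for n_q targets), set l_{qσ} = (k(σ)!/V^{k(σ)}) ∏_{i=1}^{n_q} e_{q,σ,i} and p̂^{qσ}_i(x) = ℓ̃(σ, i, x) p_{q,i}(x)/e_{q,σ,i}, and assume the total evidence D := ∑_n (1/n!) ∫_{E^n} p(Z|X, n) p⁻(X, n) dμ^{⊗n}(X) lies in (0,∞). Then D = ∑_{q ∈ Q} ∑_{σ} ω_q p(σ|n_q) l_{qσ}, and for every n and X ∈ E^n the posterior p(Z|X, n) p⁻(X, n)/D equals ∑_{q : n_q = n} ∑_{σ} ω_{qσ} ∑_{ν ∈ Perm(Fin n)} ∏_{i=1}^n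 p̂^{qσ}_i(x_{ν(i)}), where ω_{qσ} = ω_q p(σ|n_q) l_{qσ} / ∑_{q' ∈ Q} ∑_{σ'} ω_{q'} p(σ'|n_{q'}) l_{q'σ'}. (Proposition 3, update step.) -/

import Mathlib

open MeasureTheory
open scoped NNReal ENNReal

/-- A data association for `n` targets and `m` measurements: a map
`σ : Fin n → Option (Fin m)` injective on `{i : σ i ≠ none}`. -/
def IsDataAssoc {n m : ℕ} (σ : Fin n → Option (Fin m)) : Prop :=
  ∀ i j : Fin n, σ i ≠ none → σ i = σ j → i = j

instance {n m : ℕ} : DecidablePred (IsDataAssoc (n := n) (m := m)) := fun _ =>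
  by unfold IsDataAssoc; infer_instance

abbrev DataAssoc (n m : ℕ) := {σ : Fin n → Option (Fin m) // IsDataAssoc σ}

/-- Clutter count `k(σ) = m − #{i : σ i ≠ none}`. -/
def kclutter {n m : ℕ} (σ : Fin n → Option (Fin m)) : ℕ :=
  m - (Finset.univ.filter fun i => σ i ≠ none).card

/-- `ℓ̃(σ, i, x) = ℓ(z_j, x)` if `σ i = some j`, and `= 1` if `σ i = none`. -/
def ltil {Z E : Type*} {n m : ℕ} (ℓ : Z → E → ℝ≥0) (z : Fin m → Z)
    (σ : Fin n → Option (Fin m)) (i : Fin n) (x : E) : ℝ≥0 :=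
  (σ i).elim 1 fun j => ℓ (z j) x

/-- Prior association probability
`p(σ|n) = p_D^{m−k} (1−p_D)^{n−(m−k)} e^{−λV} (λV)^k / k!`. -/
noncomputable def pAssoc (pD lam V : ℝ) (n m k : ℕ) : ℝ≥0∞ :=
  ENNReal.ofReal (pD ^ (m - k) * (1 - pD) ^ (n - (m - k)) *
    (Real.exp (-(lam * V)) * ((lam * V) ^ k / (Nat.factorial k))))

/-- Conditional likelihood `p(Z|σ, X, n) = (k(σ)!/V^{k(σ)}) ∏ i, ℓ̃(σ, i, x_i)`. -/
noncomputable def condLik {Z E : Type*} {n m : ℕ} (ℓ : Z → E → ℝ≥0) (z : Fin m → Z)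
    (V : ℝ) (σ : DataAssoc n m) (X : Fin n → E) : ℝ≥0∞ :=
  ENNReal.ofReal ((Nat.factorial (kclutter σ.1)) / V ^ (kclutter σ.1)) *
    ∏ i, (ltil ℓ z σ.1 i (X i) : ℝ≥0∞)

/-- Multi-target likelihood `p(Z|X, n) = ∑_σ p(σ|n) p(Z|σ, X, n)`. -/
noncomputable def mtLik {Z E : Type*} {m : ℕ} (ℓ : Z → E → ℝ≥0) (z : Fin m → Z)
    (pD lam V : ℝ) (n : ℕ) (X : Fin n → E) : ℝ≥0∞ :=
  ∑ σ : DataAssoc n m, pAssoc pD lam V n m (kclutter σ.1) * condLik ℓ z V σ X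


/- ## Auxiliary lemmas -/


lemma lintegral_pi_prod' {E : Type*} [MeasurableSpace E] (μ : Measure E) [SigmaFinite μ] :
    ∀ {n : ℕ} (f : Fin n → E → ℝ≥0∞), (∀ i, Measurable (f i)) →
      ∫⁻ X : Fin n → E, ∏ i, f i (X i) ∂(Measure.pi fun _ => μ)
        = ∏ i, ∫⁻ x, f i x ∂μ := by
  intro n
  induction n with
  | zero =>
    intro f hf
    simp [Measure.pi_of_empty]
  | succ n ih =>
    intro f hf
    have hpres := (measurePreserving_piFinSuccAbove (fun _ : Fin (n+1) => μ) 0).symm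
    have hmeas : Measurable fun X : Fin (n+1) → E => ∏ i, f i (X i) :=
      Finset.measurable_prod _ fun i _ => (hf i).comp (measurable_pi_apply i)
    rw [← hpres.lintegral_comp hmeas]
    have hpt : ∀ y : E × (Fin n → E),
        (∏ i, f i (((MeasurableEquiv.piFinSuccAbove (fun _ : Fin (n+1) => E) 0).symm y) i))
          = f 0 y.1 * ∏ j, f j.succ (y.2 j) := by
      intro y
      rw [Fin.prod_univ_succ]
      simp [MeasurableEquiv.piFinSuccAbove, Fin.zero_succAbove]
    calc ∫⁻ y, (∏ i, f i (((MeasurableEquiv.piFinSuccAbove (fun _ : Fin (n+1) => E) 0).symm y) i)) ∂((μ).prod (Measure.pi fun _ : Fin n => μ))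
        = ∫⁻ y, f 0 y.1 * ∏ j, f j.succ (y.2 j) ∂((μ).prod (Measure.pi fun _ : Fin n => μ)) := lintegral_congr hpt
      _ = (∫⁻ x, f 0 x ∂μ) * ∫⁻ Y : Fin n → E, ∏ j, f j.succ (Y j) ∂(Measure.pi fun _ : Fin n => μ) :=
        lintegral_prod_mul ((hf 0).aemeasurable)
          ((Finset.measurable_prod (f := fun (j : Fin n) (Y : Fin n → E) => f j.succ (Y j)) _
            fun i _ => (hf i.succ).comp (measurable_pi_apply i)).aemeasurable)
      _ = ∏ i, ∫⁻ x, f i x ∂μ := by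
        rw [ih (fun i => f i.succ) (fun i => hf i.succ), Fin.prod_univ_succ]

lemma measurable_ltil' {Z E : Type*} [MeasurableSpace Z] [MeasurableSpace E] {n m : ℕ}
    {ℓ : Z → E → ℝ≥0} (hℓ : Measurable (Function.uncurry ℓ)) (z : Fin m → Z)
    (σ : Fin n → Option (Fin m)) (i : Fin n) :
    Measurable fun x => (ltil ℓ z σ i x : ℝ≥0∞) := by
  apply Measurable.coe_nnreal_ennreal
  unfold ltil
  rcases h : σ i with _ | j
  · simp only [h, Option.elim]
    exact measurable_const
  · simp only [h, Option.elim]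
    have : (fun x : E => ℓ (z j) x) = fun x => Function.uncurry ℓ (z j, x) := rfl
    rw [this]
    exact hℓ.comp (measurable_const.prodMk measurable_id)

/-- Composing a data association with a permutation of target indices. -/
def assocPerm {n m : ℕ} (ν : Equiv.Perm (Fin n)) : DataAssoc n m ≃ DataAssoc n m where
  toFun σ := ⟨σ.1 ∘ ν, fun i j hi hij => ν.injective (σ.2 _ _ hi hij)⟩
  invFun σ := ⟨σ.1 ∘ ν.symm, fun i j hi hij => ν.symm.injective (σ.2 _ _ hi hij)⟩
  left_inv σ := Subtype.ext (funext fun i => by simp)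
  right_inv σ := Subtype.ext (funext fun i => by simp)

lemma kclutter_comp {n m : ℕ} (σ : Fin n → Option (Fin m)) (ν : Equiv.Perm (Fin n)) :
    kclutter (σ ∘ ν) = kclutter σ := by
  unfold kclutter
  congr 1
  apply Finset.card_bij (fun i _ => ν i)
  · intro a ha
    simp only [Finset.mem_filter, Finset.mem_univ, true_and] at ha ⊢
    exact ha
  · intro a _ b _ h
    exact ν.injective h
  · intro b hb
    refine ⟨ν.symm b, ?_, by simp⟩
    simp only [Finset.mem_filter, Finset.mem_univ, true_and, Function.comp_apply] at hb ⊢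
    simpa using hb

/-- **Proposition 3, update step.**  Let `Q` be a finite nonempty set of hypotheses,
hypothesis `q` having cardinality `nQ q`, weight `ω q ≥ 0` with `∑ q, ω q = 1`, and
single-target pdfs `p q i`.  With the predicted multi-target pdf family
`p⁻(X,n) = ∑_{q : nQ q = n} ω_q ∑_ν ∏ᵢ p_{q,i}(x_{ν i})`, all single-target evidences
`e q σ i` finite and positive, `l q σ = (k(σ)!/V^{k(σ)}) ∏ᵢ e q σ i`, updated components
`p̂^{qσ}_i = ℓ̃(σ,i,·) p_{q,i} / e q σ i`, and total evidence
`D = ∑_n (1/n!) ∫_{Eⁿ} p(Z|X,n) p⁻(X,n) dμ^{⊗n}(X) ∈ (0,∞)`, it holds that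
`D = ∑_q ∑_σ ω_q p(σ|n_q) l_{qσ}` and the posterior `p(Z|X,n) p⁻(X,n)/D` equals
`∑_{q : nQ q = n} ∑_σ ω_{qσ} ∑_ν ∏ᵢ p̂^{qσ}_i(x_{ν i})`, where
`ω_{qσ} = ω_q p(σ|n_q) l_{qσ} / ∑_{q',σ'} ω_{q'} p(σ'|n_{q'}) l_{q'σ'}`. -/
theorem fisst_general_update_step
    {E : Type*} [MeasurableSpace E] (μ : Measure E) [SigmaFinite μ]
    {Z : Type*} [MeasurableSpace Z] (m : ℕ) (z : Fin m → Z)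
    (ℓ : Z → E → ℝ≥0) (hℓm : Measurable (Function.uncurry ℓ))
    (pD lam V : ℝ) (hpD : pD ∈ Set.Icc (0 : ℝ) 1) (hlam : 0 < lam) (hV : 0 < V)
    {Q : Type*} [Fintype Q] [Nonempty Q]
    (nQ : Q → ℕ) (ω : Q → ℝ≥0) (hω : ∑ q, ω q = 1)
    (p : (q : Q) → Fin (nQ q) → E → ℝ≥0)
    (hpm : ∀ q i, Measurable (p q i))
    (hp1 : ∀ q i, ∫⁻ x, (p q i x : ℝ≥0∞) ∂μ = 1)
    (pPred : (n : ℕ) → (Fin n → E) → ℝ≥0∞)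
    (hpPred : ∀ n X, pPred n X = ∑ q : Q,
      if h : nQ q = n then
        (ω q : ℝ≥0∞) * ∑ ν : Equiv.Perm (Fin (nQ q)),
          ∏ i, (p q i (X (Fin.cast h (ν i))) : ℝ≥0∞)
      else 0)
    (e : (q : Q) → DataAssoc (nQ q) m → Fin (nQ q) → ℝ≥0∞)
    (he : ∀ q σ i, e q σ i = ∫⁻ x, (ltil ℓ z σ.1 i x : ℝ≥0∞) * (p q i x : ℝ≥0∞) ∂μ)
    (he_fin : ∀ q σ i, e q σ i ≠ ∞) (he_pos : ∀ q σ i, 0 < e q σ i)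
    (l : (q : Q) → DataAssoc (nQ q) m → ℝ≥0∞)
    (hl : ∀ q σ, l q σ =
      ENNReal.ofReal ((Nat.factorial (kclutter σ.1)) / V ^ (kclutter σ.1)) *
        ∏ i, e q σ i)
    (phat : (q : Q) → (σ : DataAssoc (nQ q) m) → Fin (nQ q) → E → ℝ≥0∞)
    (hphat : ∀ q σ i x, phat q σ i x =
      (ltil ℓ z σ.1 i x : ℝ≥0∞) * (p q i x : ℝ≥0∞) / e q σ i)
    (D : ℝ≥0∞)
    (hD : D = ∑' n : ℕ,
      (∫⁻ X : Fin n → E, mtLik ℓ z pD lam V n X * pPred n X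
        ∂(Measure.pi fun _ : Fin n => μ)) / (Nat.factorial n : ℝ≥0∞))
    (hD_pos : 0 < D) (hD_fin : D ≠ ∞) :
    D = (∑ q : Q, ∑ σ : DataAssoc (nQ q) m,
          (ω q : ℝ≥0∞) * pAssoc pD lam V (nQ q) m (kclutter σ.1) * l q σ) ∧
    ∀ (n : ℕ) (X : Fin n → E),
      mtLik ℓ z pD lam V n X * pPred n X / D =
        ∑ q : Q,
          if h : nQ q = n then
            ∑ σ : DataAssoc (nQ q) m,
              ((ω q : ℝ≥0∞) * pAssoc pD lam V (nQ q) m (kclutter σ.1) * l q σ /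
                  ∑ q' : Q, ∑ σ' : DataAssoc (nQ q') m,
                    (ω q' : ℝ≥0∞) * pAssoc pD lam V (nQ q') m (kclutter σ'.1) *
                      l q' σ') *
                ∑ ν : Equiv.Perm (Fin (nQ q)),
                  ∏ i, phat q σ i (X (Fin.cast h (ν i)))
          else 0 := by
  -- notation
  set W : (q : Q) → DataAssoc (nQ q) m → ℝ≥0∞ :=
    fun q σ => (ω q : ℝ≥0∞) * pAssoc pD lam V (nQ q) m (kclutter σ.1) * l q σ with hW
  -- measurability of phat
  have hphat_meas : ∀ q σ i, Measurable (phat q σ i) := by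
    intro q σ i
    have : phat q σ i = fun x =>
        (ltil ℓ z σ.1 i x : ℝ≥0∞) * (p q i x : ℝ≥0∞) * (e q σ i)⁻¹ := by
      funext x; rw [hphat, div_eq_mul_inv]
    rw [this]
    exact ((measurable_ltil' hℓm z σ.1 i).mul
      ((hpm q i).coe_nnreal_ennreal)).mul_const _
  -- each phat integrates to 1
  have hphat_int : ∀ q σ i, ∫⁻ x, phat q σ i x ∂μ = 1 := by
    intro q σ i
    have h1 : ∀ x, phat q σ i x =
        (ltil ℓ z σ.1 i x : ℝ≥0∞) * (p q i x : ℝ≥0∞) * (e q σ i)⁻¹ := by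
      intro x; rw [hphat, div_eq_mul_inv]
    simp_rw [h1]
    rw [lintegral_mul_const' _ _ (by simp [(he_pos q σ i).ne'])]
    rw [← he q σ i]
    exact ENNReal.mul_inv_cancel (he_pos q σ i).ne' (he_fin q σ i)
  -- integral of a permuted phat product is 1
  have hper_int : ∀ q σ (ν : Equiv.Perm (Fin (nQ q))),
      ∫⁻ X : Fin (nQ q) → E, ∏ i, phat q σ i (X (ν i))
        ∂(Measure.pi fun _ : Fin (nQ q) => μ) = 1 := by
    intro q σ ν
    have hre : ∀ X : Fin (nQ q) → E,
        ∏ i, phat q σ i (X (ν i)) = ∏ j, phat q σ (ν.symm j) (X j) := by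
      intro X
      rw [← Equiv.prod_comp ν (fun j => phat q σ (ν.symm j) (X j))]
      simp
    simp_rw [hre]
    rw [lintegral_pi_prod' μ _ (fun j => hphat_meas q σ (ν.symm j))]
    simp [hphat_int]
  -- integral of the symmetrized phat sum is n!
  have hsum_int : ∀ q σ,
      ∫⁻ X : Fin (nQ q) → E, ∑ ν : Equiv.Perm (Fin (nQ q)), ∏ i, phat q σ i (X (ν i))
        ∂(Measure.pi fun _ : Fin (nQ q) => μ) = (Nat.factorial (nQ q) : ℝ≥0∞) := by
    intro q σ
    rw [lintegral_finset_sum (f := fun (ν : Equiv.Perm (Fin (nQ q))) (X : Fin (nQ q) → E) =>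
        ∏ i, phat q σ i (X (ν i))) Finset.univ (fun ν _ =>
      Finset.measurable_prod _ fun i _ =>
        (hphat_meas q σ i).comp (measurable_pi_apply (ν i)))]
    simp only [hper_int q σ]
    simp [Finset.card_univ, Fintype.card_perm]
  -- the pointwise key identity at n = nQ q
  have star : ∀ q (X : Fin (nQ q) → E),
      mtLik ℓ z pD lam V (nQ q) X *
        ((ω q : ℝ≥0∞) * ∑ ν : Equiv.Perm (Fin (nQ q)), ∏ i, (p q i (X (ν i)) : ℝ≥0∞))
      = ∑ σ : DataAssoc (nQ q) m, W q σ *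
          ∑ ν : Equiv.Perm (Fin (nQ q)), ∏ i, phat q σ i (X (ν i)) := by
    intro q X
    unfold mtLik
    calc (∑ σ : DataAssoc (nQ q) m,
            pAssoc pD lam V (nQ q) m (kclutter σ.1) * condLik ℓ z V σ X) *
          ((ω q : ℝ≥0∞) * ∑ ν : Equiv.Perm (Fin (nQ q)), ∏ i, (p q i (X (ν i)) : ℝ≥0∞))
        = ∑ ν : Equiv.Perm (Fin (nQ q)), ∑ σ : DataAssoc (nQ q) m,
            (ω q : ℝ≥0∞) * (pAssoc pD lam V (nQ q) m (kclutter σ.1) * condLik ℓ z V σ X *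
              ∏ i, (p q i (X (ν i)) : ℝ≥0∞)) := by
          rw [mul_left_comm, Finset.sum_mul_sum, Finset.mul_sum, Finset.sum_comm]
          refine Finset.sum_congr rfl fun ν _ => ?_
          rw [Finset.mul_sum]
      _ = ∑ ν : Equiv.Perm (Fin (nQ q)), ∑ σ : DataAssoc (nQ q) m,
            W q σ * ∏ i, phat q σ i (X (ν i)) := by
          refine Finset.sum_congr rfl fun ν _ => ?_
          rw [← Equiv.sum_comp (assocPerm ν)
            (fun τ => W q τ * ∏ i, phat q τ i (X (ν i)))]
          refine Finset.sum_congr rfl fun σ _ => ?_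
          -- unfold the permuted association
          have hτ1 : (assocPerm (m := m) ν σ).1 = σ.1 ∘ ν := rfl
          set τ : DataAssoc (nQ q) m := assocPerm ν σ with hτ
          have hkτ : kclutter τ.1 = kclutter σ.1 := by
            rw [hτ1]; exact kclutter_comp σ.1 ν
          -- cancel the evidences against phat denominators
          have hcan : (∏ i, e q τ i) * ∏ i, phat q τ i (X (ν i))
              = (∏ i, (ltil ℓ z τ.1 i (X (ν i)) : ℝ≥0∞)) * ∏ i, (p q i (X (ν i)) : ℝ≥0∞) := by
            rw [← Finset.prod_mul_distrib, ← Finset.prod_mul_distrib]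
            refine Finset.prod_congr rfl fun i _ => ?_
            rw [hphat]
            exact ENNReal.mul_div_cancel (he_pos q τ i).ne' (he_fin q τ i)
          -- the likelihood product reindexed by ν
          have hlik : (∏ i, (ltil ℓ z σ.1 i (X i) : ℝ≥0∞))
              = ∏ i, (ltil ℓ z τ.1 i (X (ν i)) : ℝ≥0∞) := by
            rw [hτ1]
            have : ∀ i, (ltil ℓ z (σ.1 ∘ ν) i (X (ν i)) : ℝ≥0∞)
                = (ltil ℓ z σ.1 (ν i) (X (ν i)) : ℝ≥0∞) := fun i => rfl
            simp_rw [this]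
            exact (Equiv.prod_comp ν (fun i => (ltil ℓ z σ.1 i (X i) : ℝ≥0∞))).symm
          simp only [hW]
          rw [hl, hkτ]
          unfold condLik
          rw [hlik]
          trans ((ω q : ℝ≥0∞) * pAssoc pD lam V (nQ q) m (kclutter σ.1) *
            ENNReal.ofReal ((Nat.factorial (kclutter σ.1) : ℝ) / V ^ kclutter σ.1) *
            ((∏ i, e q τ i) * ∏ i, phat q τ i (X (ν i))))
          · rw [hcan]; ring
          · ring
      _ = ∑ σ : DataAssoc (nQ q) m, W q σ *
            ∑ ν : Equiv.Perm (Fin (nQ q)), ∏ i, phat q σ i (X (ν i)) := by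
          rw [Finset.sum_comm]
          refine Finset.sum_congr rfl fun σ _ => ?_
          rw [Finset.mul_sum]
  -- pointwise identity in dite form, any n
  have hint : ∀ (n : ℕ) (X : Fin n → E),
      mtLik ℓ z pD lam V n X * pPred n X
        = ∑ q : Q, if h : nQ q = n then
            ∑ σ : DataAssoc (nQ q) m, W q σ *
              ∑ ν : Equiv.Perm (Fin (nQ q)), ∏ i, phat q σ i (X (Fin.cast h (ν i)))
          else 0 := by
    intro n X
    rw [hpPred, Finset.mul_sum]
    refine Finset.sum_congr rfl fun q _ => ?_
    by_cases h : nQ q = n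
    · rw [dif_pos h, dif_pos h]
      subst h
      simpa using star q X
    · rw [dif_neg h, dif_neg h, mul_zero]
  -- the integral of each dite term
  have hIq : ∀ (n : ℕ) (q : Q),
      (∫⁻ X : Fin n → E, (if h : nQ q = n then
          ∑ σ : DataAssoc (nQ q) m, W q σ *
            ∑ ν : Equiv.Perm (Fin (nQ q)), ∏ i, phat q σ i (X (Fin.cast h (ν i)))
        else 0) ∂(Measure.pi fun _ : Fin n => μ))
      = if nQ q = n then (∑ σ : DataAssoc (nQ q) m, W q σ) * (Nat.factorial (nQ q) : ℝ≥0∞)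
        else 0 := by
    intro n q
    by_cases h : nQ q = n
    · subst h
      rw [if_pos rfl]
      simp only [dite_eq_ite, if_true, eq_self_iff_true, dite_true, Fin.cast_refl, id_eq]
      rw [lintegral_finset_sum (f := fun (σ : DataAssoc (nQ q) m) (X : Fin (nQ q) → E) =>
          W q σ * ∑ ν : Equiv.Perm (Fin (nQ q)), ∏ i, phat q σ i (X (ν i)))
        Finset.univ (fun σ _ => (Finset.measurable_sum _ (fun ν _ =>
          Finset.measurable_prod _ fun i _ =>
            (hphat_meas q σ i).comp (measurable_pi_apply (ν i)))).const_mul _)]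
      rw [Finset.sum_mul]
      refine Finset.sum_congr rfl fun σ _ => ?_
      rw [lintegral_const_mul (f := fun X : Fin (nQ q) → E =>
          ∑ ν : Equiv.Perm (Fin (nQ q)), ∏ i, phat q σ i (X (ν i))) _
        (Finset.measurable_sum _ (fun ν _ =>
          Finset.measurable_prod _ fun i _ =>
            (hphat_meas q σ i).comp (measurable_pi_apply (ν i))))]
      rw [hsum_int q σ]
    · simp [dif_neg h, if_neg h]
  -- D equals the finite double sum
  have hfac_ne : ∀ k : ℕ, (Nat.factorial k : ℝ≥0∞) ≠ 0 := by
    intro k; exact_mod_cast (Nat.factorial_pos k).ne'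
  have hfac_fin : ∀ k : ℕ, (Nat.factorial k : ℝ≥0∞) ≠ ∞ := by
    intro k; exact ENNReal.natCast_ne_top _
  have hDval : D = ∑ q : Q, ∑ σ : DataAssoc (nQ q) m, W q σ := by
    rw [hD]
    have h1 : ∀ n : ℕ,
        (∫⁻ X : Fin n → E, mtLik ℓ z pD lam V n X * pPred n X
          ∂(Measure.pi fun _ : Fin n => μ)) / (Nat.factorial n : ℝ≥0∞)
        = ∑ q : Q, if nQ q = n then ∑ σ : DataAssoc (nQ q) m, W q σ else 0 := by
      intro n
      have h2 : (∫⁻ X : Fin n → E, mtLik ℓ z pD lam V n X * pPred n X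
          ∂(Measure.pi fun _ : Fin n => μ))
          = ∑ q : Q, if nQ q = n then
              (∑ σ : DataAssoc (nQ q) m, W q σ) * (Nat.factorial (nQ q) : ℝ≥0∞) else 0 := by
        simp_rw [hint n]
        rw [lintegral_finset_sum (f := fun (q : Q) (X : Fin n → E) =>
            if h : nQ q = n then
              ∑ σ : DataAssoc (nQ q) m, W q σ *
                ∑ ν : Equiv.Perm (Fin (nQ q)), ∏ i, phat q σ i (X (Fin.cast h (ν i)))
            else 0) Finset.univ (fun q _ => ?_)]
        · exact Finset.sum_congr rfl fun q _ => hIq n q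
        · by_cases h : nQ q = n
          · simp only [dif_pos h]
            exact Finset.measurable_sum _ fun σ _ => (Finset.measurable_sum _ (fun ν _ =>
              Finset.measurable_prod _ fun i _ =>
                (hphat_meas q σ i).comp (measurable_pi_apply _))).const_mul _
          · simp only [dif_neg h]; exact measurable_const
      rw [h2, div_eq_mul_inv, Finset.sum_mul]
      refine Finset.sum_congr rfl fun q _ => ?_
      by_cases h : nQ q = n
      · subst h
        rw [if_pos rfl, if_pos rfl, ← div_eq_mul_inv, mul_div_assoc,
          ENNReal.div_self (hfac_ne _) (hfac_fin _), mul_one]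
      · rw [if_neg h, if_neg h, zero_mul]
    simp_rw [h1]
    rw [Summable.tsum_finsetSum (fun q _ => ENNReal.summable)]
    refine Finset.sum_congr rfl fun q _ => ?_
    rw [tsum_eq_single (nQ q) (fun n hn => if_neg (fun hh => hn hh.symm))]
    rw [if_pos rfl]
  refine ⟨hDval, ?_⟩
  intro n X
  rw [hint n X, hDval]
  rw [ENNReal.div_eq_inv_mul, Finset.mul_sum]
  refine Finset.sum_congr rfl fun q _ => ?_
  by_cases h : nQ q = n
  · rw [dif_pos h, dif_pos h, Finset.mul_sum]
    refine Finset.sum_congr rfl fun σ _ => ?_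
    rw [ENNReal.div_eq_inv_mul]
    ring
  · rw [dif_neg h, dif_neg h, mul_zero]
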